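/- Suppose ρ ≠ 0, u ≠ 0, and u satisfies −(2/(σ√(1−ρ²)))·arctan(√(1−ρ²)/ρ) < u < (2/(σ√(1−ρ²)))·(π − arctan(√(1−ρ²)/ρ)) (for ρ = 0, suppose −π/σ < u < π/σ). Then lim_{t→0+} ∂Λ/∂t(u,t) = Λ⁽¹⁾(u), where, writing w = uσ√(1−ρ²)/2, Λ⁽¹⁾(u) = (aρ/σ − r)·u − (2a/σ²)·log( ( √(1−ρ²)·cos w + ρ·sin w )/√(1−ρ²) ) + v₀·( E₁(u)·cos²w + E₂(u)·cos w·sin w + E₃(u)·sin²w ) / ( σ²( √(1−ρ²)·cos w + ρ·sin w )² ), with E₁(u) = −uσ(kσ + bρ)/2, E₂(u) = −2kσ√(1−ρ²) + (kσ + bρ)/√(1−ρ²), and E₃(u) = −( 2kρσ + b + uσ(kσ + bρ)/2 ). -/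

import Mathlib

/-!
Fix `u ≠ 0` and put `w = uσ√(1 - ρ²)/2`. At `t = 0` the radicand of `S` is `(2w)² > 0`, so up
to the sign of `w` the function `S(u, ·)` is smooth near `0`; as `Λ` is even in the angle `S`,
we may replace `S` by its smooth branch through `w`. The condition on `u` makes
`D = √(1 - ρ²) cos w + ρ sin w`, and with it `G(u, 0) = uσD`, nonzero: for `ρ ≠ 0` and
`β = arctan (√(1 - ρ²)/ρ)`, `D` is a nonzero multiple of `sin (β + w)` with `0 < β + w < π`,
and for `ρ = 0` it is `cos w` with `|w| < π/2`. Hence `Λ(u, ·)` is `C¹` at `0`, so `∂Λ/∂t(u, t)`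
tends to `∂Λ/∂t(u, 0)`, computed by the chain rule; the factor `t` in front of the logarithm
keeps its derivative out of the limit.
-/

open Filter Topology Real

theorem mul_cos_add_mul_sin_ne_zero {p q w : ℝ} (hq : q ≠ 0)
    (h₀ : 0 < arctan (p / q) + w) (hπ : arctan (p / q) + w < π) :
    p * cos w + q * sin w ≠ 0 := by
  set β := arctan (p / q)
  have hcos : 0 < cos β := cos_arctan_pos _
  have hsin : sin β = p / q * cos β := by
    rw [← tan_arctan (p / q), tan_eq_sin_div_cos, div_mul_cancel₀ _ hcos.ne']
  have key : q * sin (β + w) = cos β * (p * cos w + q * sin w) := by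
    rw [sin_add, hsin]; field_simp
  intro h
  rw [h, mul_zero] at key
  exact (mul_ne_zero hq (sin_pos_of_pos_of_lt_pi h₀ hπ).ne') key

noncomputable section

namespace Heston

variable (r k a b σ ρ v₀ x₀ u : ℝ)

-- `S = √Q / 2`; `G` and `Lambda` are `G(u, t)` and `Λ(u, t)` with `S(u, t)` replaced by a free
-- angle `s`
def Q (t : ℝ) : ℝ :=
  u ^ 2 * (1 - ρ ^ 2) * σ ^ 2 - 2 * t * u * (k * σ ^ 2 + b * ρ * σ) - t ^ 2 * b ^ 2

def G (s t : ℝ) : ℝ := 2 * s * cos s + (b * t + ρ * σ * u) * sin s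

def derivG (s s' t : ℝ) : ℝ :=
  2 * s' * cos s - 2 * s * s' * sin s + b * sin s + (b * t + ρ * σ * u) * s' * cos s

def Lambda (s t : ℝ) : ℝ :=
  -(t * r * u) + t * (a / σ ^ 2) * (b * t + ρ * σ * u - 2 * log (G b σ ρ u s t / (2 * s))) +
    v₀ * (u ^ 2 - 2 * t * k * u) * sin s / G b σ ρ u s t - u * x₀

-- the branch of `S = √Q / 2` that is smooth at `t = 0`, where it equals `w = uσ√(1 - ρ²)/2`
def angle (t : ℝ) : ℝ := u * σ * √(1 - ρ ^ 2) / 2 * √(Q k b σ ρ u t / Q k b σ ρ u 0)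

def Lambda1 : ℝ :=
  (a * ρ / σ - r) * u -
    2 * a / σ ^ 2 *
      log ((√(1 - ρ ^ 2) * cos (u * σ * √(1 - ρ ^ 2) / 2) +
        ρ * sin (u * σ * √(1 - ρ ^ 2) / 2)) / √(1 - ρ ^ 2)) +
    v₀ * ((-(u * σ * (k * σ + b * ρ)) / 2) * cos (u * σ * √(1 - ρ ^ 2) / 2) ^ 2 +
        (-(2 * k * σ * √(1 - ρ ^ 2)) + (k * σ + b * ρ) / √(1 - ρ ^ 2)) *
          cos (u * σ * √(1 - ρ ^ 2) / 2) * sin (u * σ * √(1 - ρ ^ 2) / 2) +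
        (-(2 * k * ρ * σ + b + u * σ * (k * σ + b * ρ) / 2)) *
          sin (u * σ * √(1 - ρ ^ 2) / 2) ^ 2) /
      (σ ^ 2 * (√(1 - ρ ^ 2) * cos (u * σ * √(1 - ρ ^ 2) / 2) +
        ρ * sin (u * σ * √(1 - ρ ^ 2) / 2)) ^ 2)

variable {r k a b σ ρ v₀ x₀ u}

theorem sqrt_one_sub_sq_mul_cos_add_mul_sin_ne_zero (hσ : 0 < σ) (hρ₁ : -1 < ρ) (hρ₂ : ρ < 1)
    (hcond : (ρ ≠ 0 ∧ -(2 / (σ * √(1 - ρ ^ 2))) * arctan (√(1 - ρ ^ 2) / ρ) < u ∧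
        u < 2 / (σ * √(1 - ρ ^ 2)) * (π - arctan (√(1 - ρ ^ 2) / ρ))) ∨
      (ρ = 0 ∧ -(π / σ) < u ∧ u < π / σ)) :
    √(1 - ρ ^ 2) * cos (u * σ * √(1 - ρ ^ 2) / 2) +
      ρ * sin (u * σ * √(1 - ρ ^ 2) / 2) ≠ 0 := by
  have hy : 0 < σ * √(1 - ρ ^ 2) := mul_pos hσ (sqrt_pos.2 (by nlinarith))
  rcases hcond with ⟨hρ, hlo, hhi⟩ | ⟨rfl, hlo, hhi⟩
  · refine mul_cos_add_mul_sin_ne_zero hρ ?_ ?_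
    · rw [neg_mul, div_mul_eq_mul_div, ← neg_div, div_lt_iff₀ hy] at hlo
      linarith
    · rw [div_mul_eq_mul_div, lt_div_iff₀ hy] at hhi
      linarith
  · rw [← neg_div, div_lt_iff₀ hσ] at hlo
    rw [lt_div_iff₀ hσ] at hhi
    norm_num
    exact (cos_pos_of_mem_Ioo ⟨by linarith, by linarith⟩).ne'

theorem G_neg (s t : ℝ) : G b σ ρ u (-s) t = -G b σ ρ u s t := by
  simp only [G, cos_neg, sin_neg]; ring

theorem Lambda_neg (s t : ℝ) :
    Lambda r k a b σ ρ v₀ x₀ u (-s) t = Lambda r k a b σ ρ v₀ x₀ u s t := by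
  simp only [Lambda, G_neg, sin_neg, mul_neg, neg_div_neg_eq]

theorem hasDerivAt_G_comp {θ : ℝ → ℝ} {θ' t₀ : ℝ} (hθ : HasDerivAt θ θ' t₀) :
    HasDerivAt (fun t ↦ G b σ ρ u (θ t) t) (derivG b σ ρ u (θ t₀) θ' t₀) t₀ := by
  have hlin : HasDerivAt (fun t ↦ b * t + ρ * σ * u) b t₀ := by
    simpa using ((hasDerivAt_id t₀).const_mul b).add_const (ρ * σ * u)
  refine ((hθ.const_mul 2).mul hθ.cos).add (hlin.mul hθ.sin) |>.congr_deriv ?_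
  simp only [derivG]
  ring

theorem contDiffAt_Lambda_comp {n : WithTop ℕ∞} {θ : ℝ → ℝ} {t₀ : ℝ} (hθ : ContDiffAt ℝ n θ t₀)
    (hθ₀ : θ t₀ ≠ 0) (hG : G b σ ρ u (θ t₀) t₀ ≠ 0) :
    ContDiffAt ℝ n (fun t ↦ Lambda r k a b σ ρ v₀ x₀ u (θ t) t) t₀ := by
  have hGc : ContDiffAt ℝ n (fun t ↦ G b σ ρ u (θ t) t) t₀ := by
    unfold G; fun_prop
  have h2θ : 2 * θ t₀ ≠ 0 := mul_ne_zero two_ne_zero hθ₀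
  have hlog : G b σ ρ u (θ t₀) t₀ / (2 * θ t₀) ≠ 0 := div_ne_zero hG h2θ
  unfold Lambda
  fun_prop (disch := assumption)

theorem hasDerivAt_Lambda_comp_zero {θ : ℝ → ℝ} {θ' : ℝ} (hθ : HasDerivAt θ θ' 0)
    (hθ₀ : θ 0 ≠ 0) (hG : G b σ ρ u (θ 0) 0 ≠ 0) :
    HasDerivAt (fun t ↦ Lambda r k a b σ ρ v₀ x₀ u (θ t) t)
      (-(r * u) + a / σ ^ 2 * (ρ * σ * u - 2 * log (G b σ ρ u (θ 0) 0 / (2 * θ 0))) +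
        v₀ * (-(2 * k * u) * sin (θ 0) / G b σ ρ u (θ 0) 0 +
          u ^ 2 * (cos (θ 0) * θ' * G b σ ρ u (θ 0) 0 - sin (θ 0) * derivG b σ ρ u (θ 0) θ' 0) /
            G b σ ρ u (θ 0) 0 ^ 2)) 0 := by
  have hGd : HasDerivAt (fun t ↦ G b σ ρ u (θ t) t) _ 0 := hasDerivAt_G_comp hθ
  have h2θ : 2 * θ 0 ≠ 0 := mul_ne_zero two_ne_zero hθ₀
  have hlog : G b σ ρ u (θ 0) 0 / (2 * θ 0) ≠ 0 := div_ne_zero hG h2θ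
  have hX : DifferentiableAt ℝ
      (fun t ↦ b * t + ρ * σ * u - 2 * log (G b σ ρ u (θ t) t / (2 * θ t))) 0 := by
    have := hθ.differentiableAt
    have := hGd.differentiableAt
    fun_prop (disch := assumption)
  have hpoly : HasDerivAt (fun t : ℝ ↦ v₀ * (u ^ 2 - 2 * t * k * u)) (v₀ * -(2 * k * u)) 0 := by
    have := (((hasDerivAt_id' (0 : ℝ)).const_mul 2).mul_const k).mul_const u
    exact (this.const_sub (u ^ 2)).const_mul v₀ |>.congr_deriv (by ring)
  refine ((((hasDerivAt_id' (0 : ℝ)).mul_const r).mul_const u).neg.add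
    (((hasDerivAt_id' (0 : ℝ)).mul_const (a / σ ^ 2)).mul hX.hasDerivAt) |>.add
    ((hpoly.mul hθ.sin).div hGd hG)).sub_const (u * x₀) |>.congr_deriv ?_
  simp only [Pi.mul_apply]
  field_simp
  ring

theorem hasDerivAt_Q (t : ℝ) :
    HasDerivAt (Q k b σ ρ u) (-(2 * u * (k * σ ^ 2 + b * ρ * σ)) - 2 * t * b ^ 2) t := by
  have hlin := (((hasDerivAt_id' t).const_mul 2).mul_const u).mul_const (k * σ ^ 2 + b * ρ * σ)
  have hsq := (hasDerivAt_pow 2 t).mul_const (b ^ 2)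
  refine ((hlin.const_sub (u ^ 2 * (1 - ρ ^ 2) * σ ^ 2)).sub hsq).congr_deriv ?_
  push_cast
  ring

theorem Q_zero (hρ : ρ ^ 2 ≤ 1) : Q k b σ ρ u 0 = (u * σ * √(1 - ρ ^ 2)) ^ 2 := by
  rw [Q, mul_pow, mul_pow, sq_sqrt (by linarith)]
  ring

theorem sqrt_one_sub_sq_pos (hρ : ρ ^ 2 < 1) : 0 < √(1 - ρ ^ 2) := sqrt_pos.2 (by linarith)

theorem Q_zero_ne_zero (hσ : σ ≠ 0) (hρ : ρ ^ 2 < 1) (hu : u ≠ 0) : Q k b σ ρ u 0 ≠ 0 := by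
  rw [Q_zero hρ.le]
  exact pow_ne_zero 2 (mul_ne_zero (mul_ne_zero hu hσ) (sqrt_one_sub_sq_pos hρ).ne')

theorem angle_zero (hσ : σ ≠ 0) (hρ : ρ ^ 2 < 1) (hu : u ≠ 0) :
    angle k b σ ρ u 0 = u * σ * √(1 - ρ ^ 2) / 2 := by
  rw [angle, div_self (Q_zero_ne_zero hσ hρ hu), sqrt_one, mul_one]

theorem Lambda_angle (hσ : σ ≠ 0) (hρ : ρ ^ 2 < 1) (hu : u ≠ 0) (t : ℝ) :
    Lambda r k a b σ ρ v₀ x₀ u (angle k b σ ρ u t) t =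
      Lambda r k a b σ ρ v₀ x₀ u (1 / 2 * √(Q k b σ ρ u t)) t := by
  set c := u * σ * √(1 - ρ ^ 2)
  have hangle : angle k b σ ρ u t = c / |c| * (1 / 2 * √(Q k b σ ρ u t)) := by
    rw [angle, Q_zero hρ.le, sqrt_div' _ (sq_nonneg c), sqrt_sq_eq_abs]
    ring
  rcases (mul_ne_zero (mul_ne_zero hu hσ) (sqrt_one_sub_sq_pos hρ).ne').lt_or_gt with hc | hc
  · rw [hangle, abs_of_neg hc, div_neg, div_self hc.ne, neg_one_mul, Lambda_neg]
  · rw [hangle, abs_of_pos hc, div_self hc.ne', one_mul]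

theorem hasDerivAt_angle_zero (hσ : σ ≠ 0) (hρ : ρ ^ 2 < 1) (hu : u ≠ 0) :
    HasDerivAt (angle k b σ ρ u) (-(k * σ + b * ρ) / (2 * √(1 - ρ ^ 2))) 0 := by
  have hQ0 := Q_zero_ne_zero (k := k) (b := b) hσ hρ hu
  have hratio : Q k b σ ρ u 0 / Q k b σ ρ u 0 ≠ 0 := by rw [div_self hQ0]; exact one_ne_zero
  refine ((hasDerivAt_Q 0).div_const _ |>.sqrt hratio).const_mul _ |>.congr_deriv ?_
  have hy := sqrt_one_sub_sq_pos hρ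
  rw [div_self hQ0, sqrt_one, Q_zero hρ.le]
  field_simp
  ring

theorem contDiffAt_angle_zero {n : WithTop ℕ∞} (hσ : σ ≠ 0) (hρ : ρ ^ 2 < 1) (hu : u ≠ 0) :
    ContDiffAt ℝ n (angle k b σ ρ u) 0 := by
  have hQ : ContDiff ℝ n (Q k b σ ρ u) := by unfold Q; fun_prop
  have hratio : Q k b σ ρ u 0 / Q k b σ ρ u 0 ≠ 0 := by
    rw [div_self (Q_zero_ne_zero hσ hρ hu)]; exact one_ne_zero
  unfold angle
  fun_prop (disch := assumption)

theorem G_angle_zero (hσ : σ ≠ 0) (hρ : ρ ^ 2 < 1) (hu : u ≠ 0) :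
    G b σ ρ u (angle k b σ ρ u 0) 0 =
      u * σ * (√(1 - ρ ^ 2) * cos (u * σ * √(1 - ρ ^ 2) / 2) +
        ρ * sin (u * σ * √(1 - ρ ^ 2) / 2)) := by
  rw [angle_zero hσ hρ hu, G]
  ring

theorem angle_zero_ne_zero (hσ : σ ≠ 0) (hρ : ρ ^ 2 < 1) (hu : u ≠ 0) :
    angle k b σ ρ u 0 ≠ 0 := by
  rw [angle_zero hσ hρ hu]
  exact div_ne_zero (mul_ne_zero (mul_ne_zero hu hσ) (sqrt_one_sub_sq_pos hρ).ne') two_ne_zero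

theorem G_angle_zero_ne_zero (hσ : σ ≠ 0) (hρ : ρ ^ 2 < 1) (hu : u ≠ 0)
    (hD : √(1 - ρ ^ 2) * cos (u * σ * √(1 - ρ ^ 2) / 2) + ρ * sin (u * σ * √(1 - ρ ^ 2) / 2) ≠ 0) :
    G b σ ρ u (angle k b σ ρ u 0) 0 ≠ 0 := by
  rw [G_angle_zero hσ hρ hu]
  exact mul_ne_zero (mul_ne_zero hu hσ) hD

theorem hasDerivAt_Lambda_angle_zero (hσ : σ ≠ 0) (hρ : ρ ^ 2 < 1) (hu : u ≠ 0)
    (hD : √(1 - ρ ^ 2) * cos (u * σ * √(1 - ρ ^ 2) / 2) + ρ * sin (u * σ * √(1 - ρ ^ 2) / 2) ≠ 0) :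
    HasDerivAt (fun t ↦ Lambda r k a b σ ρ v₀ x₀ u (angle k b σ ρ u t) t)
      (Lambda1 r k a b σ ρ v₀ u) 0 := by
  refine (hasDerivAt_Lambda_comp_zero (hasDerivAt_angle_zero hσ hρ hu)
    (angle_zero_ne_zero hσ hρ hu) (G_angle_zero_ne_zero hσ hρ hu hD)).congr_deriv ?_
  have hy := (sqrt_one_sub_sq_pos hρ).ne'
  rw [G_angle_zero hσ hρ hu, angle_zero hσ hρ hu]
  simp only [derivG, Lambda1]
  field_simp
  ring

theorem tendsto_deriv_Lambda_angle (hσ : σ ≠ 0) (hρ : ρ ^ 2 < 1) (hu : u ≠ 0)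
    (hD : √(1 - ρ ^ 2) * cos (u * σ * √(1 - ρ ^ 2) / 2) + ρ * sin (u * σ * √(1 - ρ ^ 2) / 2) ≠ 0) :
    Tendsto (deriv fun t ↦ Lambda r k a b σ ρ v₀ x₀ u (angle k b σ ρ u t) t) (𝓝[>] 0)
      (𝓝 (Lambda1 r k a b σ ρ v₀ u)) := by
  have hC : ContDiffAt ℝ 1 (fun t ↦ Lambda r k a b σ ρ v₀ x₀ u (angle k b σ ρ u t) t) 0 :=
    contDiffAt_Lambda_comp (contDiffAt_angle_zero hσ hρ hu) (angle_zero_ne_zero hσ hρ hu)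
      (G_angle_zero_ne_zero hσ hρ hu hD)
  rw [← (hasDerivAt_Lambda_angle_zero hσ hρ hu hD).deriv]
  exact (hC.derivWithin (m := 0) le_rfl).continuousAt.tendsto.mono_left nhdsWithin_le_nhds

end Heston

end

theorem heston_Lambda1_general
    (r k a b σ ρ v₀ x₀ : ℝ) (hσ : 0 < σ)
    (hρ₁ : -1 < ρ) (hρ₂ : ρ < 1)
    (S G Λ : ℝ → ℝ → ℝ)
    (hS : ∀ u t : ℝ, S u t = (1 / 2) *
      Real.sqrt (u ^ 2 * (1 - ρ ^ 2) * σ ^ 2 -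
        2 * t * u * (k * σ ^ 2 + b * ρ * σ) - t ^ 2 * b ^ 2))
    (hG : ∀ u t : ℝ, G u t =
      2 * S u t * Real.cos (S u t) + (b * t + ρ * σ * u) * Real.sin (S u t))
    (hΛ : ∀ u t : ℝ, Λ u t =
      -(t * r * u) +
        t * (a / σ ^ 2) *
          (b * t + ρ * σ * u - 2 * Real.log (G u t / (2 * S u t))) +
        v₀ * (u ^ 2 - 2 * t * k * u) * Real.sin (S u t) / G u t - u * x₀)
    (u : ℝ) (hu : u ≠ 0)
    (hcond : (ρ ≠ 0 ∧
        -(2 / (σ * Real.sqrt (1 - ρ ^ 2))) *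
            Real.arctan (Real.sqrt (1 - ρ ^ 2) / ρ) < u ∧
        u < (2 / (σ * Real.sqrt (1 - ρ ^ 2))) *
            (Real.pi - Real.arctan (Real.sqrt (1 - ρ ^ 2) / ρ))) ∨
      (ρ = 0 ∧ -(Real.pi / σ) < u ∧ u < Real.pi / σ)) :
    Tendsto (fun t : ℝ => deriv (fun s : ℝ => Λ u s) t) (𝓝[>] (0 : ℝ))
      (𝓝 ((a * ρ / σ - r) * u -
        2 * a / σ ^ 2 *
          Real.log ((Real.sqrt (1 - ρ ^ 2) *
              Real.cos (u * σ * Real.sqrt (1 - ρ ^ 2) / 2) +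
            ρ * Real.sin (u * σ * Real.sqrt (1 - ρ ^ 2) / 2)) /
            Real.sqrt (1 - ρ ^ 2)) +
        v₀ * ((-(u * σ * (k * σ + b * ρ)) / 2) *
              Real.cos (u * σ * Real.sqrt (1 - ρ ^ 2) / 2) ^ 2 +
            (-(2 * k * σ * Real.sqrt (1 - ρ ^ 2)) +
                (k * σ + b * ρ) / Real.sqrt (1 - ρ ^ 2)) *
              Real.cos (u * σ * Real.sqrt (1 - ρ ^ 2) / 2) *
              Real.sin (u * σ * Real.sqrt (1 - ρ ^ 2) / 2) +
            (-(2 * k * ρ * σ + b + u * σ * (k * σ + b * ρ) / 2)) *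
              Real.sin (u * σ * Real.sqrt (1 - ρ ^ 2) / 2) ^ 2) /
          (σ ^ 2 * (Real.sqrt (1 - ρ ^ 2) *
              Real.cos (u * σ * Real.sqrt (1 - ρ ^ 2) / 2) +
            ρ * Real.sin (u * σ * Real.sqrt (1 - ρ ^ 2) / 2)) ^ 2))) := by
  have hρ : ρ ^ 2 < 1 := by nlinarith
  have hΛ_angle : (fun s ↦ Λ u s) =
      fun t ↦ Heston.Lambda r k a b σ ρ v₀ x₀ u (Heston.angle k b σ ρ u t) t := by
    funext t
    rw [Heston.Lambda_angle hσ.ne' hρ hu, hΛ, hG, hS]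
    rfl
  rw [hΛ_angle]
  exact Heston.tendsto_deriv_Lambda_angle hσ.ne' hρ hu
    (Heston.sqrt_one_sub_sq_mul_cos_add_mul_sin_ne_zero hσ hρ₁ hρ₂ hcond)

/-- Theorem 5.4: explicit expression for Λ⁽¹⁾ in the Heston model. Under
condition (5.9) (resp. −π/σ < u < π/σ when ρ = 0), with w = uσ√(1−ρ²)/2,
lim_{t→0⁺} ∂Λ/∂t(u,t) = Λ⁽¹⁾(u)
  = (aρ/σ − r)u − (2a/σ²) log((√(1−ρ²) cos w + ρ sin w)/√(1−ρ²))
    + v₀(E₁ cos²w + E₂ cos w sin w + E₃ sin²w)/(σ²(√(1−ρ²) cos w + ρ sin w)²),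
with E₁ = −uσ(kσ + bρ)/2, E₂ = −2kσ√(1−ρ²) + (kσ + bρ)/√(1−ρ²),
E₃ = −(2kρσ + b + uσ(kσ + bρ)/2). -/
theorem heston_Lambda1
    (r k a b σ ρ v₀ x₀ : ℝ) (ha : 0 ≤ a) (hb : 0 ≤ b) (hσ : 0 < σ)
    (hρ₁ : -1 < ρ) (hρ₂ : ρ < 1) (hv₀ : 0 < v₀)
    (S G Λ : ℝ → ℝ → ℝ)
    (hS : ∀ u t : ℝ, S u t = (1 / 2) *
      Real.sqrt (u ^ 2 * (1 - ρ ^ 2) * σ ^ 2 -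
        2 * t * u * (k * σ ^ 2 + b * ρ * σ) - t ^ 2 * b ^ 2))
    (hG : ∀ u t : ℝ, G u t =
      2 * S u t * Real.cos (S u t) + (b * t + ρ * σ * u) * Real.sin (S u t))
    (hΛ : ∀ u t : ℝ, Λ u t =
      -(t * r * u) +
        t * (a / σ ^ 2) *
          (b * t + ρ * σ * u - 2 * Real.log (G u t / (2 * S u t))) +
        v₀ * (u ^ 2 - 2 * t * k * u) * Real.sin (S u t) / G u t - u * x₀)
    (u : ℝ) (hu : u ≠ 0)
    (hcond : (ρ ≠ 0 ∧
        -(2 / (σ * Real.sqrt (1 - ρ ^ 2))) *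
            Real.arctan (Real.sqrt (1 - ρ ^ 2) / ρ) < u ∧
        u < (2 / (σ * Real.sqrt (1 - ρ ^ 2))) *
            (Real.pi - Real.arctan (Real.sqrt (1 - ρ ^ 2) / ρ))) ∨
      (ρ = 0 ∧ -(Real.pi / σ) < u ∧ u < Real.pi / σ)) :
    Tendsto (fun t : ℝ => deriv (fun s : ℝ => Λ u s) t) (𝓝[>] (0 : ℝ))
      (𝓝 ((a * ρ / σ - r) * u -
        2 * a / σ ^ 2 *
          Real.log ((Real.sqrt (1 - ρ ^ 2) *
              Real.cos (u * σ * Real.sqrt (1 - ρ ^ 2) / 2) +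
            ρ * Real.sin (u * σ * Real.sqrt (1 - ρ ^ 2) / 2)) /
            Real.sqrt (1 - ρ ^ 2)) +
        v₀ * ((-(u * σ * (k * σ + b * ρ)) / 2) *
              Real.cos (u * σ * Real.sqrt (1 - ρ ^ 2) / 2) ^ 2 +
            (-(2 * k * σ * Real.sqrt (1 - ρ ^ 2)) +
                (k * σ + b * ρ) / Real.sqrt (1 - ρ ^ 2)) *
              Real.cos (u * σ * Real.sqrt (1 - ρ ^ 2) / 2) *
              Real.sin (u * σ * Real.sqrt (1 - ρ ^ 2) / 2) +
            (-(2 * k * ρ * σ + b + u * σ * (k * σ + b * ρ) / 2)) *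
              Real.sin (u * σ * Real.sqrt (1 - ρ ^ 2) / 2) ^ 2) /
          (σ ^ 2 * (Real.sqrt (1 - ρ ^ 2) *
              Real.cos (u * σ * Real.sqrt (1 - ρ ^ 2) / 2) +
            ρ * Real.sin (u * σ * Real.sqrt (1 - ρ ^ 2) / 2)) ^ 2))) :=
  heston_Lambda1_general r k a b σ ρ v₀ x₀ hσ hρ₁ hρ₂ S G Λ hS hG hΛ u hu hcond
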